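/- Fix a positive integer q, an integer p and real numbers x₂, x₃. Then ρ_{(p/q,x₂,x₃)} is a unitary representation of Heis₃(ℤ) on ℂ^{ℤ/qℤ}: every operator ρ_{(p/q,x₂,x₃)}(n) is unitary, ρ_{(p/q,x₂,x₃)}(n·m) = ρ_{(p/q,x₂,x₃)}(n) ∘ ρ_{(p/q,x₂,x₃)}(m) for all n, m ∈ Heis₃(ℤ), and ρ_{(p/q,x₂,x₃)}(0,0,0) is the identity. Moreover the central element (1,0,0) acts as the scalar e^{2πip/q} times the identity. -/

import Mathlib

open Real

/-- The group law of the discrete Heisenberg group `Heis₃(ℤ)` on triples `(n₁, n₂, n₃)`: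
`(n₁,n₂,n₃)·(m₁,m₂,m₃) = (n₁+m₁+n₃m₂, n₂+m₂, n₃+m₃)`. -/
def heisMul (n m : ℤ × ℤ × ℤ) : ℤ × ℤ × ℤ :=
  (n.1 + m.1 + n.2.2 * m.2.1, n.2.1 + m.2.1, n.2.2 + m.2.2)

/-- Inverse for the Heisenberg group law. -/
def heisInv (n : ℤ × ℤ × ℤ) : ℤ × ℤ × ℤ :=
  (-n.1 + n.2.1 * n.2.2, -n.2.1, -n.2.2)

lemma heisMul_inv (n : ℤ × ℤ × ℤ) : heisMul n (heisInv n) = (0, 0, 0) := by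
  simp [heisMul, heisInv]; ring

lemma heisInv_mul (n : ℤ × ℤ × ℤ) : heisMul (heisInv n) n = (0, 0, 0) := by
  simp [heisMul, heisInv]; ring

/-- The phase factor. -/
noncomputable def rc (q : ℕ) (p : ℤ) (x₂ x₃ : ℝ) (n : ℤ × ℤ × ℤ) (k : ZMod q) : ℂ :=
  Complex.exp ((2 * (π : ℂ) * Complex.I / (q : ℂ)) *
    ((n.2.2 : ℂ) * (x₃ : ℂ) + (n.2.1 : ℂ) * (x₂ : ℂ) + (n.1 : ℂ) * (p : ℂ) +
      (k.val : ℂ) * (n.2.1 : ℂ) * (p : ℂ)))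

lemma rc_abs (q : ℕ) (p : ℤ) (x₂ x₃ : ℝ) (n : ℤ × ℤ × ℤ) (k : ZMod q) :
    ‖rc q p x₂ x₃ n k‖ = 1 := by
  have h : (2 * (π : ℂ) * Complex.I / (q : ℂ)) *
      ((n.2.2 : ℂ) * (x₃ : ℂ) + (n.2.1 : ℂ) * (x₂ : ℂ) + (n.1 : ℂ) * (p : ℂ) +
        (k.val : ℂ) * (n.2.1 : ℂ) * (p : ℂ)) =
      ((2 * π / (q : ℝ) * ((n.2.2 : ℝ) * x₃ + (n.2.1 : ℝ) * x₂ + (n.1 : ℝ) * (p : ℝ) +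
        (k.val : ℝ) * (n.2.1 : ℝ) * (p : ℝ)) : ℝ) : ℂ) * Complex.I := by
    push_cast; ring
  rw [rc, h, Complex.norm_exp_ofReal_mul_I]

lemma rc_zero (q : ℕ) (p : ℤ) (x₂ x₃ : ℝ) (k : ZMod q) :
    rc q p x₂ x₃ (0, 0, 0) k = 1 := by
  simp [rc]

lemma rc_mul (q : ℕ) [NeZero q] (p : ℤ) (x₂ x₃ : ℝ) (n m : ℤ × ℤ × ℤ) (k : ZMod q) :
    rc q p x₂ x₃ (heisMul n m) k =
      rc q p x₂ x₃ n k * rc q p x₂ x₃ m (k + (n.2.2 : ZMod q)) := by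
  obtain ⟨t, ht⟩ : ∃ t : ℤ, (k.val : ℤ) + n.2.2 - ((k + (n.2.2 : ZMod q)).val : ℤ) = q * t := by
    have h0 : ((((k.val : ℤ) + n.2.2 - ((k + (n.2.2 : ZMod q)).val : ℤ)) : ℤ) : ZMod q) = 0 := by
      push_cast; simp
    exact (ZMod.intCast_zmod_eq_zero_iff_dvd _ q).mp h0
  have hq : (q : ℂ) ≠ 0 := Nat.cast_ne_zero.mpr (NeZero.ne q)
  rw [rc, rc, rc, ← Complex.exp_add]
  have hv : ((k + (n.2.2 : ZMod q)).val : ℂ) = (k.val : ℂ) + (n.2.2 : ℂ) - (q : ℂ) * t := by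
    have := ht
    have : ((k + (n.2.2 : ZMod q)).val : ℤ) = (k.val : ℤ) + n.2.2 - q * t := by omega
    exact_mod_cast congrArg (fun z : ℤ => (z : ℂ)) this
  rw [show (2 * (π : ℂ) * Complex.I / (q : ℂ)) *
      (((heisMul n m).2.2 : ℂ) * (x₃ : ℂ) + ((heisMul n m).2.1 : ℂ) * (x₂ : ℂ) +
        ((heisMul n m).1 : ℂ) * (p : ℂ) + (k.val : ℂ) * ((heisMul n m).2.1 : ℂ) * (p : ℂ)) =
      ((2 * (π : ℂ) * Complex.I / (q : ℂ)) *
        ((n.2.2 : ℂ) * (x₃ : ℂ) + (n.2.1 : ℂ) * (x₂ : ℂ) + (n.1 : ℂ) * (p : ℂ) +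
          (k.val : ℂ) * (n.2.1 : ℂ) * (p : ℂ)) +
      (2 * (π : ℂ) * Complex.I / (q : ℂ)) *
        ((m.2.2 : ℂ) * (x₃ : ℂ) + (m.2.1 : ℂ) * (x₂ : ℂ) + (m.1 : ℂ) * (p : ℂ) +
          ((k + (n.2.2 : ZMod q)).val : ℂ) * (m.2.1 : ℂ) * (p : ℂ))) +
      ((t * m.2.1 * p : ℤ) : ℂ) * (2 * (π : ℂ) * Complex.I) from by
    rw [hv]; simp only [heisMul]; push_cast; field_simp; ring]
  rw [Complex.exp_add, Complex.exp_int_mul_two_pi_mul_I, mul_one]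

variable (q : ℕ) [NeZero q] (p : ℤ) (x₂ x₃ : ℝ)

/-- The underlying map. -/
noncomputable def rhoFun (n : ℤ × ℤ × ℤ) (φ : EuclideanSpace ℂ (ZMod q)) :
    EuclideanSpace ℂ (ZMod q) :=
  WithLp.toLp 2 (fun k => rc q p x₂ x₃ n k * φ (k + (n.2.2 : ZMod q)))

lemma rhoFun_comp (n m : ℤ × ℤ × ℤ) (φ : EuclideanSpace ℂ (ZMod q)) :
    rhoFun q p x₂ x₃ (heisMul n m) φ = rhoFun q p x₂ x₃ n (rhoFun q p x₂ x₃ m φ) := by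
  ext k
  simp only [rhoFun, PiLp.toLp_apply, rc_mul q p x₂ x₃ n m k]
  have h3 : ((heisMul n m).2.2 : ZMod q) = (n.2.2 : ZMod q) + (m.2.2 : ZMod q) := by
    simp [heisMul]
  rw [h3]
  ring_nf

lemma rhoFun_id (φ : EuclideanSpace ℂ (ZMod q)) : rhoFun q p x₂ x₃ (0, 0, 0) φ = φ := by
  ext k
  show rc q p x₂ x₃ (0, 0, 0) k * φ (k + (((0, 0, 0) : ℤ × ℤ × ℤ).2.2 : ZMod q)) = φ k
  rw [rc_zero, one_mul, show (((0 : ℤ)) : ZMod q) = 0 from Int.cast_zero, add_zero]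

/-- The unitary operator. -/
noncomputable def rhoLIE (n : ℤ × ℤ × ℤ) :
    EuclideanSpace ℂ (ZMod q) ≃ₗᵢ[ℂ] EuclideanSpace ℂ (ZMod q) where
  toFun := rhoFun q p x₂ x₃ n
  invFun := rhoFun q p x₂ x₃ (heisInv n)
  map_add' φ ψ := by
    ext k; simp [rhoFun]; ring
  map_smul' c φ := by
    ext k; simp [rhoFun]; ring
  left_inv φ := by
    show rhoFun q p x₂ x₃ (heisInv n) (rhoFun q p x₂ x₃ n φ) = φ
    rw [← rhoFun_comp, heisInv_mul, rhoFun_id]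
  right_inv φ := by
    show rhoFun q p x₂ x₃ n (rhoFun q p x₂ x₃ (heisInv n) φ) = φ
    rw [← rhoFun_comp, heisMul_inv, rhoFun_id]
  norm_map' φ := by
    have key : ∑ k : ZMod q, ‖rhoFun q p x₂ x₃ n φ k‖ ^ 2 = ∑ k : ZMod q, ‖φ k‖ ^ 2 := by
      have h1 : ∀ k : ZMod q, ‖rhoFun q p x₂ x₃ n φ k‖ = ‖φ (k + (n.2.2 : ZMod q))‖ := fun k => by
        simp only [rhoFun, PiLp.toLp_apply, norm_mul, rc_abs, one_mul]
      simp only [h1]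
      exact Fintype.sum_equiv (Equiv.addRight ((n.2.2 : ZMod q))) _ _ (fun k => rfl)
    rw [EuclideanSpace.norm_eq, EuclideanSpace.norm_eq]
    exact congrArg Real.sqrt key

/-- `ρ_{(p/q,x₂,x₃)}` is a unitary representation of `Heis₃(ℤ)` on `ℂ^{ℤ/qℤ}`:
every operator is unitary (a linear isometric automorphism), the defining formula holds,
it is multiplicative for the Heisenberg group law, sends the identity to the identity, and
the central element `(1,0,0)` acts as the scalar `e^{2πip/q}`. -/
theorem rhoFin_is_unitary_representation (q : ℕ) [NeZero q] (p : ℤ) (x₂ x₃ : ℝ) :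
    ∃ ρ : (ℤ × ℤ × ℤ) → (EuclideanSpace ℂ (ZMod q) ≃ₗᵢ[ℂ] EuclideanSpace ℂ (ZMod q)),
      (∀ (n : ℤ × ℤ × ℤ) (φ : EuclideanSpace ℂ (ZMod q)) (k : ZMod q),
        ρ n φ k = Complex.exp ((2 * (π : ℂ) * Complex.I / (q : ℂ)) *
            ((n.2.2 : ℂ) * (x₃ : ℂ) + (n.2.1 : ℂ) * (x₂ : ℂ) + (n.1 : ℂ) * (p : ℂ) +
              (k.val : ℂ) * (n.2.1 : ℂ) * (p : ℂ))) * φ (k + (n.2.2 : ZMod q))) ∧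
      (∀ (n m : ℤ × ℤ × ℤ) (φ : EuclideanSpace ℂ (ZMod q)),
        ρ (heisMul n m) φ = ρ n (ρ m φ)) ∧
      (∀ φ : EuclideanSpace ℂ (ZMod q), ρ (0, 0, 0) φ = φ) ∧
      (∀ φ : EuclideanSpace ℂ (ZMod q),
        ρ (1, 0, 0) φ = Complex.exp (2 * (π : ℂ) * Complex.I * (p : ℂ) / (q : ℂ)) • φ) := by
  refine ⟨rhoLIE q p x₂ x₃, fun n φ k => rfl, rhoFun_comp q p x₂ x₃,
    rhoFun_id q p x₂ x₃, fun φ => ?_⟩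
  ext k
  show rc q p x₂ x₃ (1, 0, 0) k * φ (k + (((1, 0, 0) : ℤ × ℤ × ℤ).2.2 : ZMod q)) = _
  have h1 : rc q p x₂ x₃ (1, 0, 0) k =
      Complex.exp (2 * (π : ℂ) * Complex.I * (p : ℂ) / (q : ℂ)) := by
    rw [rc]; congr 1; push_cast; ring
  rw [h1]
  have h0 : (((1, 0, 0) : ℤ × ℤ × ℤ).2.2 : ZMod q) = 0 := by norm_num
  rw [h0, add_zero]
  rfl
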